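/- arXiv:2412.00284 — 4 statements merged into one kernel-verified Lean document; each statement's English description precedes it below -/
import Mathlib

section
/- Let α be a positive real number and set β := [(1/e + (1/3)·ln(1/3)) / (1/e − 1/3)]·α. Then for all positive integers n and m satisfying 2 ≤ m < n/e, the inequality (m/n)^{α·m} ≤ (2/n)^{2α} · e^{−β(m−2)} holds. -/
open Real

lemma log3_lb : 1.5 * Real.log 2 + 1/18 ≤ Real.log 3 := by
  have h : Real.log (8/9) ≤ 8/9 - 1 := Real.log_le_sub_one_of_pos (by norm_num)
  rw [Real.log_div (by norm_num) (by norm_num)] at h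
  have h8 : Real.log 8 = 3 * Real.log 2 := by
    rw [show (8:ℝ) = 2^3 by norm_num, Real.log_pow]; push_cast; ring
  have h9 : Real.log 9 = 2 * Real.log 3 := by
    rw [show (9:ℝ) = 3^2 by norm_num, Real.log_pow]; push_cast; ring
  linarith

lemma log3_ub : Real.log 3 ≤ 1.5 * Real.log 2 + 1/16 := by
  have h : Real.log (9/8) ≤ 9/8 - 1 := Real.log_le_sub_one_of_pos (by norm_num)
  rw [Real.log_div (by norm_num) (by norm_num)] at h
  have h8 : Real.log 8 = 3 * Real.log 2 := by
    rw [show (8:ℝ) = 2^3 by norm_num, Real.log_pow]; push_cast; ring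
  have h9 : Real.log 9 = 2 * Real.log 3 := by
    rw [show (9:ℝ) = 3^2 by norm_num, Real.log_pow]; push_cast; ring
  linarith

/-- **Lemma 4, first inequality.** Let `α` be a positive real number and set
`β := [(1/e + (1/3)·ln(1/3)) / (1/e − 1/3)]·α`. Then for all positive integers `n` and `m`
satisfying `2 ≤ m < n/e`, the inequality `(m/n)^(α·m) ≤ (2/n)^(2α) · e^(−β(m−2))` holds. -/
theorem stmt_6 (α : ℝ) (hα : 0 < α)
    (β : ℝ)
    (hβ : β = (1 / Real.exp 1 + (1 / 3) * Real.log (1 / 3)) /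
              (1 / Real.exp 1 - 1 / 3) * α)
    (n m : ℕ) (hn : 0 < n) (hm : 2 ≤ m) (hmn : (m : ℝ) < (n : ℝ) / Real.exp 1) :
    ((m : ℝ) / n) ^ (α * (m : ℝ)) ≤
      ((2 : ℝ) / n) ^ (2 * α) * Real.exp (-β * ((m : ℝ) - 2)) := by
  have hE1 : (2.7182818283 : ℝ) < Real.exp 1 := Real.exp_one_gt_d9
  have hE2 : Real.exp 1 < 2.7182818286 := Real.exp_one_lt_d9
  have hlog2 : (0.6931471803:ℝ) < Real.log 2 := Real.log_two_gt_d9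
  have hlog2' : Real.log 2 < 0.6931471808 := Real.log_two_lt_d9
  have hD : (0:ℝ) < 1 / Real.exp 1 - 1/3 := by
    have : (1:ℝ)/3 < 1 / Real.exp 1 :=
      one_div_lt_one_div_of_lt (Real.exp_pos 1) (by linarith)
    linarith
  -- β ≤ α/10
  have hβα : β ≤ α/10 := by
    have hc : (1 / Real.exp 1 + (1 / 3) * Real.log (1 / 3)) /
              (1 / Real.exp 1 - 1 / 3) ≤ 1/10 := by
      rw [div_le_iff₀ hD, show (1/3:ℝ) = (3:ℝ)⁻¹ by norm_num, Real.log_inv]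
      have hInv : 1 / Real.exp 1 < 1 / 2.7182818283 :=
        one_div_lt_one_div_of_lt (by norm_num) hE1
      have := log3_lb
      nlinarith
    rw [hβ]
    calc (1 / Real.exp 1 + (1 / 3) * Real.log (1 / 3)) /
              (1 / Real.exp 1 - 1 / 3) * α ≤ 1/10 * α :=
          mul_le_mul_of_nonneg_right hc hα.le
      _ = α/10 := by ring
  have hm0 : (0:ℝ) < m := by positivity
  have hm2 : (2:ℝ) ≤ m := by exact_mod_cast hm
  have hn0 : (0:ℝ) < n := by positivity
  have hmn' : (m:ℝ) * Real.exp 1 < n := by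
    rw [← lt_div_iff₀ (Real.exp_pos 1)]; exact hmn
  rw [Real.rpow_def_of_pos (div_pos hm0 hn0), Real.rpow_def_of_pos (by positivity),
    ← Real.exp_add, Real.exp_le_exp,
    Real.log_div (ne_of_gt hm0) (ne_of_gt hn0),
    Real.log_div (by norm_num) (ne_of_gt hn0)]
  -- goal: (log m - log n) * (α * m) ≤ (log 2 - log n) * (2 * α) + -β * (m - 2)
  have hNA : Real.log m + 1 ≤ Real.log n := by
    have h1 : Real.log ((m:ℝ) * Real.exp 1) ≤ Real.log n :=
      Real.log_le_log (by positivity) hmn'.le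
    rwa [Real.log_mul (ne_of_gt hm0) (by positivity), Real.log_exp] at h1
  rcases eq_or_lt_of_le hm2 with heq | hlt
  · rw [← heq]
    norm_num
    exact le_of_eq (by ring)
  · have hm3 : (3:ℝ) ≤ m := by
      have : 2 < m := by exact_mod_cast (by exact_mod_cast hlt : (2:ℝ) < m)
      exact_mod_cast this
    have hmA : Real.log m ≤ Real.log 3 + ((m:ℝ) - 3)/3 := by
      have h := Real.log_le_sub_one_of_pos (show (0:ℝ) < (m:ℝ)/3 by linarith)
      rw [Real.log_div (ne_of_gt hm0) (by norm_num)] at h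
      linarith
    -- key linear reduction
    have key : (m:ℝ) * Real.log m + (1/10) * ((m:ℝ) - 2) - 2 * Real.log 2
        ≤ ((m:ℝ) - 2) * Real.log n := by
      have h1 : ((m:ℝ) - 2) * (Real.log m + 1) ≤ ((m:ℝ) - 2) * Real.log n :=
        mul_le_mul_of_nonneg_left hNA (by linarith)
      nlinarith [log3_ub]
    have hβm : β * ((m:ℝ) - 2) ≤ α/10 * ((m:ℝ) - 2) :=
      mul_le_mul_of_nonneg_right hβα (by linarith)
    have hαkey : α * ((m:ℝ) * Real.log m + (1/10) * ((m:ℝ) - 2) - 2 * Real.log 2)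
        ≤ α * (((m:ℝ) - 2) * Real.log n) :=
      mul_le_mul_of_nonneg_left key hα.le
    nlinarith [hβm, hαkey]
end

section
/- Let α be a positive real number. Then for all positive integers n and m satisfying n/e < m ≤ n, the inequality (m/n)^{α·m} ≤ e^{(α/(e−1))·(m−n)} holds. -/
lemma key_mul_log_chord {x : ℝ} (h1 : (Real.exp 1)⁻¹ ≤ x) (h2 : x ≤ 1) :
    x * Real.log x ≤ (x - 1) / (Real.exp 1 - 1) := by
  have hE : (1 : ℝ) < Real.exp 1 := by
    have := Real.exp_one_gt_d9; linarith
  set E := Real.exp 1 with hEdef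
  have hEpos : (0 : ℝ) < E := by linarith
  have hapos : (0 : ℝ) < E⁻¹ := by positivity
  have halt : E⁻¹ < 1 := by
    rw [inv_lt_one_iff₀]; right; exact hE
  set a := E⁻¹ with ha
  set t := (1 - x) / (1 - a) with ht
  set u := (x - a) / (1 - a) with hu
  have hden : (0 : ℝ) < 1 - a := by linarith
  have ht0 : 0 ≤ t := div_nonneg (by linarith) hden.le
  have hu0 : 0 ≤ u := div_nonneg (by linarith) hden.le
  have htu : t + u = 1 := by rw [ht, hu, ← add_div]; exact (div_eq_one_iff_eq hden.ne').mpr (by ring)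
  have hcomb : t • a + u • (1 : ℝ) = x := by
    rw [smul_eq_mul, smul_eq_mul, ht, hu, div_mul_eq_mul_div, div_mul_eq_mul_div, ← add_div, div_eq_iff hden.ne']; ring
  have hconv := Real.convexOn_mul_log.2 (Set.mem_Ici.mpr hapos.le)
    (Set.mem_Ici.mpr (zero_le_one)) ht0 hu0 htu
  rw [hcomb] at hconv
  have hloga : Real.log a = -1 := by
    rw [ha, Real.log_inv, Real.log_exp]
  have hlog1 : Real.log (1 : ℝ) = 0 := Real.log_one
  have : x * Real.log x ≤ t * (a * (-1)) + u * (1 * 0) := by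
    simpa [hloga, hlog1] using hconv
  have hEq : t * (a * (-1)) + u * (1 * 0) = (x - 1) / (E - 1) := by
    have hE1 : (0:ℝ) < E - 1 := by linarith
    rw [ht]
    field_simp [ha]
    have haE : a * E = 1 := by rw [ha]; exact inv_mul_cancel₀ hEpos.ne'
    linear_combination (x - 1) * haE
  linarith [this, hEq.symm.le, hEq.le]

/-- **Lemma 4, second inequality.** Let `α` be a positive real number. Then for all positive
integers `n` and `m` satisfying `n/e < m ≤ n`, the inequality
`(m/n)^(α·m) ≤ e^((α/(e−1))·(m−n))` holds. -/
theorem stmt_7 (α : ℝ) (hα : 0 < α) (n m : ℕ) (hn : 0 < n) (hm : 0 < m)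
    (hlow : (n : ℝ) / Real.exp 1 < (m : ℝ)) (hmn : m ≤ n) :
    ((m : ℝ) / n) ^ (α * (m : ℝ)) ≤
      Real.exp (α / (Real.exp 1 - 1) * ((m : ℝ) - (n : ℝ))) := by
  have hE : (1 : ℝ) < Real.exp 1 := by
    have := Real.exp_one_gt_d9; linarith
  have hnpos : (0 : ℝ) < n := by exact_mod_cast hn
  have hmpos : (0 : ℝ) < m := by exact_mod_cast hm
  set x : ℝ := (m : ℝ) / n with hx
  have hxpos : 0 < x := div_pos hmpos hnpos
  have hx1 : x ≤ 1 := by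
    rw [hx, div_le_one hnpos]; exact_mod_cast hmn
  have hxlow : (Real.exp 1)⁻¹ ≤ x := by
    rw [hx, le_div_iff₀ hnpos, inv_mul_eq_div, div_le_iff₀ (by linarith : (0:ℝ) < Real.exp 1)]
    nlinarith [hlow, (div_lt_iff₀ (by linarith : (0:ℝ) < Real.exp 1)).mp hlow]
  have hchord := key_mul_log_chord hxlow hx1
  rw [Real.rpow_def_of_pos hxpos, Real.exp_le_exp]
  have hm_eq : (m : ℝ) = x * n := by rw [hx]; field_simp
  have key : (m : ℝ) * Real.log x ≤ ((m : ℝ) - n) / (Real.exp 1 - 1) := by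
    have h1 : (m : ℝ) * Real.log x = n * (x * Real.log x) := by rw [hm_eq]; ring
    have h2 : ((m : ℝ) - n) / (Real.exp 1 - 1) = n * ((x - 1) / (Real.exp 1 - 1)) := by
      rw [hm_eq]; field_simp
    rw [h1, h2]
    exact mul_le_mul_of_nonneg_left hchord hnpos.le
  calc Real.log x * (α * (m : ℝ)) = α * ((m : ℝ) * Real.log x) := by ring
    _ ≤ α * (((m : ℝ) - n) / (Real.exp 1 - 1)) := by
        exact mul_le_mul_of_nonneg_left key hα.le
    _ = α / (Real.exp 1 - 1) * ((m : ℝ) - (n : ℝ)) := by ring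
end

section
/- For every real number u with 1/e ≤ u ≤ 1, the inequality u·ln u ≤ (u − 1)/(e − 1) holds. -/
/-- **Secant bound for `u·ln u` on `[1/e, 1]`.** For every real number `u` with
`1/e ≤ u ≤ 1`, the inequality `u·ln u ≤ (u − 1)/(e − 1)` holds. -/
theorem stmt_8 (u : ℝ) (h1 : 1 / Real.exp 1 ≤ u) (h2 : u ≤ 1) :
    u * Real.log u ≤ (u - 1) / (Real.exp 1 - 1) := by
  have he : (1 : ℝ) < Real.exp 1 := by
    have := Real.exp_one_gt_d9; linarith
  have hepos : (0 : ℝ) < Real.exp 1 := by linarith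
  set e := Real.exp 1 with he1
  have hd : (0 : ℝ) < 1 - 1 / e := by
    rw [sub_pos, div_lt_one hepos]; exact he
  have h3 : (1:ℝ) - e⁻¹ ≠ 0 := by
    have : e⁻¹ < 1 := by rw [inv_lt_one_iff₀]; right; exact he
    linarith
  have h4 : e - 1 ≠ 0 := by linarith
  have h5 : (-1:ℝ) + e ≠ 0 := by linarith
  have h6 : -e + e^2 ≠ 0 := by nlinarith
  set a : ℝ := (1 - u) / (1 - 1 / e) with ha
  set b : ℝ := (u - 1 / e) / (1 - 1 / e) with hb
  have ha0 : 0 ≤ a := div_nonneg (by linarith) hd.le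
  have hb0 : 0 ≤ b := div_nonneg (by linarith) hd.le
  have hab : a + b = 1 := by
    rw [ha, hb, ← add_div, div_eq_one_iff_eq hd.ne']
    ring
  have hcomb : a * (1 / e) + b * 1 = u := by
    rw [ha, hb, div_mul_eq_mul_div, mul_one, ← add_div,
      show (1 - u) * (1 / e) + (u - 1 / e) = u * (1 - 1 / e) by ring]
    exact mul_div_cancel_right₀ u hd.ne'
  have key := Real.convexOn_mul_log.2 (x := 1 / e) (y := 1)
    (by simp [Set.mem_Ici]; positivity) (by norm_num) ha0 hb0 hab
  simp only [smul_eq_mul] at key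
  rw [hcomb] at key
  have hlog : Real.log (1 / e) = -1 := by
    rw [Real.log_div one_ne_zero (ne_of_gt hepos), Real.log_one, he1, Real.log_exp]; ring
  rw [hlog, Real.log_one] at key
  have : a * (1 / e * -1) + b * (1 * 0) = (u - 1) / (e - 1) := by
    rw [ha]
    field_simp [h3, h5, h6]
    ring
  linarith [key, this.symm ▸ key]
end

section
/- Let ε be a real number with 0 < ε < 1/e, set α := ln(1/ε) − 1, β := [(1/e + (1/3)·ln(1/3)) / (1/e − 1/3)]·α, and κ₁ := 3^{−2α}/(1 − e^{−β}) + 1/(1 − e^{−α/(e−1)}). Then for every integer n ≥ 2, the finite sum ∑_{m=2}^{n} (m/n)^{α·m} is strictly less than κ₁. -/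
private lemma tangent_line' {x y : ℝ} (hx : 0 < x) (hy : 0 < y) :
    x * Real.log x + (Real.log x + 1) * (y - x) ≤ y * Real.log y := by
  have h := Real.log_le_sub_one_of_pos (div_pos hx hy)
  rw [Real.log_div hx.ne' hy.ne'] at h
  have h2 := mul_le_mul_of_nonneg_left h hy.le
  have h3 : y * (x / y - 1) = x - y := by field_simp
  rw [h3] at h2
  nlinarith [h2]

private lemma chord_bound' {p q t : ℝ} (hp : 0 < p) (hpt : p ≤ t) (htq : t ≤ q) :
    (q - p) * (t * Real.log t) ≤ (q - t) * (p * Real.log p) + (t - p) * (q * Real.log q) := by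
  have ht : 0 < t := hp.trans_le hpt
  have hq : 0 < q := ht.trans_le htq
  have h1 := tangent_line' ht hp
  have h2 := tangent_line' ht hq
  nlinarith [mul_le_mul_of_nonneg_left h1 (by linarith : (0:ℝ) ≤ q - t),
             mul_le_mul_of_nonneg_left h2 (by linarith : (0:ℝ) ≤ t - p)]

private lemma phi_chord' {p q t c : ℝ} (hp : 0 < p) (hpt : p ≤ t) (htq : t ≤ q)
    (hc : c * (q - p) = p * Real.log p - q * Real.log q) :
    t * Real.log t + c * t ≤ p * Real.log p + c * p := by
  rcases eq_or_lt_of_le (hpt.trans htq) with h | h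
  · have ht : t = p := le_antisymm (h ▸ htq) hpt
    simp [ht]
  · have hqp : 0 < q - p := by linarith
    have hch := chord_bound' hp hpt htq
    have hkey : c * (q - p) * (t - p) = (p * Real.log p - q * Real.log q) * (t - p) := by
      rw [hc]
    have hmain : (q - p) * (t * Real.log t + c * t) ≤ (q - p) * (p * Real.log p + c * p) := by
      nlinarith [hch, hkey]
    exact le_of_mul_le_mul_left hmain hqp

private lemma log3_bounds' : (1.0952 : ℝ) < Real.log 3 ∧ Real.log 3 < 1.1023 := by
  have h98u : Real.log (9/8 : ℝ) ≤ 1/8 := by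
    have := Real.log_le_sub_one_of_pos (show (0:ℝ) < 9/8 by norm_num)
    linarith
  have h98l : (1:ℝ)/9 ≤ Real.log (9/8 : ℝ) := by
    have h := Real.log_le_sub_one_of_pos (show (0:ℝ) < 8/9 by norm_num)
    have h2 : Real.log (8/9 : ℝ) = - Real.log (9/8 : ℝ) := by
      rw [← Real.log_inv]; norm_num
    rw [h2] at h; linarith
  have hrel : Real.log (9/8 : ℝ) = 2 * Real.log 3 - 3 * Real.log 2 := by
    rw [show (9:ℝ)/8 = 3^2 / 2^3 by norm_num,
        Real.log_div (by norm_num) (by norm_num), Real.log_pow, Real.log_pow]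
    push_cast; ring
  have l2a := Real.log_two_gt_d9
  have l2b := Real.log_two_lt_d9
  constructor <;> nlinarith

private lemma geom_helper' {r : ℝ} (h0 : 0 < r) (h1 : r < 1) (N : ℕ) :
    ∑ i ∈ Finset.range N, r ^ i < 1 / (1 - r) := by
  have hne : r ≠ 1 := ne_of_lt h1
  rw [geom_sum_eq hne]
  have he : (r ^ N - 1) / (r - 1) = (1 - r ^ N) / (1 - r) := by
    rw [div_eq_div_iff (by intro hc; apply hne; linarith : r - 1 ≠ 0) (by intro hc; apply hne; linarith : 1 - r ≠ 0)]
    ring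
  rw [he]
  have hrN : 0 < r ^ N := pow_pos h0 N
  have hd : 0 < 1 - r := by linarith
  rw [div_lt_div_iff₀ hd hd]
  nlinarith

set_option maxHeartbeats 1000000 in
/-- **Key summation bound for Algorithm 1.** Let `ε` be a real number with `0 < ε < 1/e`, set
`α := ln(1/ε) − 1`, `β := [(1/e + (1/3)·ln(1/3)) / (1/e − 1/3)]·α`, and
`κ₁ := 3^(−2α)/(1 − e^(−β)) + 1/(1 − e^(−α/(e−1)))`. Then for every integer `n ≥ 2`, the
finite sum `∑_{m=2}^{n} (m/n)^(α·m)` is strictly less than `κ₁`. -/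
theorem stmt_10 (ε : ℝ) (hε0 : 0 < ε) (hε1 : ε < 1 / Real.exp 1)
    (α β κ₁ : ℝ)
    (hα : α = Real.log (1 / ε) - 1)
    (hβ : β = (1 / Real.exp 1 + (1 / 3) * Real.log (1 / 3)) /
              (1 / Real.exp 1 - 1 / 3) * α)
    (hκ₁ : κ₁ = (3 : ℝ) ^ (-(2 * α)) / (1 - Real.exp (-β)) +
                1 / (1 - Real.exp (-(α / (Real.exp 1 - 1)))))
    (n : ℕ) (hn : 2 ≤ n) :
    ∑ m ∈ Finset.Icc 2 n, ((m : ℝ) / n) ^ (α * (m : ℝ)) < κ₁ := by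
  have hE1 : (2.7182818283 : ℝ) < Real.exp 1 := Real.exp_one_gt_d9
  have hE2 : Real.exp 1 < 2.7182818286 := Real.exp_one_lt_d9
  have hEpos : (0:ℝ) < Real.exp 1 := Real.exp_pos 1
  obtain ⟨hL3l, hL3u⟩ := log3_bounds'
  have hlog13 : Real.log (1/3 : ℝ) = - Real.log 3 := by rw [one_div, Real.log_inv]
  have hlogE : Real.log (1 / Real.exp 1) = -1 := by
    rw [one_div, Real.log_inv, Real.log_exp]
  -- α positive
  have hα0 : 0 < α := by
    have h1 : Real.exp 1 < 1 / ε := by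
      rw [lt_div_iff₀ hε0]
      nlinarith [mul_lt_mul_of_pos_left hε1 hEpos, mul_one_div_cancel hEpos.ne']
    have h2 := Real.log_lt_log hEpos h1
    rw [Real.log_exp] at h2
    rw [hα]; linarith
  set c : ℝ := (1 / Real.exp 1 + (1 / 3) * Real.log (1 / 3)) /
      (1 / Real.exp 1 - 1 / 3) with hcdef
  have hβ' : β = c * α := hβ
  have h3E : (0:ℝ) < 3 - Real.exp 1 := by linarith
  have hd : (0:ℝ) < 1 / Real.exp 1 - 1 / 3 := by
    have := one_div_lt_one_div_of_lt hEpos (show Real.exp 1 < 3 by linarith)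
    linarith
  have hc_pos : 0 < c := by
    rw [hcdef]
    apply div_pos _ hd
    rw [hlog13]
    have h2 : Real.log 3 / 3 < 1 / Real.exp 1 := by
      rw [div_lt_div_iff₀ (by norm_num) hEpos]
      nlinarith
    linarith
  have hcL : c ≤ Real.log 3 - 1 := by
    rw [hcdef, div_le_iff₀ hd]
    have hEi : Real.exp 1 * (1 / Real.exp 1) = 1 := mul_one_div_cancel hEpos.ne'
    rw [hlog13]
    nlinarith [hEi, hL3l, hE1, hEpos]
  have hβpos : 0 < β := by rw [hβ']; exact mul_pos hc_pos hα0
  have hc_key : c * (1 / Real.exp 1 - 1/3)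
      = (1/3) * Real.log (1/3 : ℝ) - (1 / Real.exp 1) * Real.log (1 / Real.exp 1) := by
    rw [hcdef, div_mul_cancel₀ _ hd.ne', hlogE]
    ring
  -- step 1 : monotonicity of φ on (0, 1/3]
  have step1 : ∀ a t : ℝ, 0 < a → a ≤ t → t ≤ 1/3 →
      t * Real.log t + c * t ≤ a * Real.log a + c * a := by
    intro a t ha hat ht3
    have ht : 0 < t := ha.trans_le hat
    have h1 := tangent_line' ht ha
    have h2 : Real.log t ≤ - Real.log 3 := by
      rw [← hlog13]; exact Real.log_le_log ht ht3
    have hta : 0 ≤ t - a := by linarith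
    have hm1 : (Real.log t + 1) * (t - a) ≤ (1 - Real.log 3) * (t - a) :=
      mul_le_mul_of_nonneg_right (by linarith) hta
    have hm2 : (1 - Real.log 3) * (t - a) ≤ (-c) * (t - a) :=
      mul_le_mul_of_nonneg_right (by linarith) hta
    nlinarith [h1, hm1, hm2]
  -- main φ-lemma
  have hphi : ∀ a t : ℝ, 0 < a → a ≤ 1/3 → a ≤ t → t ≤ 1 / Real.exp 1 →
      t * Real.log t + c * t ≤ a * Real.log a + c * a := by
    intro a t ha ha3 hat hte
    by_cases h : t ≤ 1/3
    · exact step1 a t ha hat h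
    · push_neg at h
      have h13 : (1:ℝ)/3 ≤ t := h.le
      have hstep := phi_chord' (show (0:ℝ) < 1/3 by norm_num) h13 hte hc_key
      have hstep2 := step1 a (1/3) ha ha3 le_rfl
      linarith
  -- basic positivity
  have hn0 : (0:ℝ) < n := by
    have : (0:ℕ) < n := by omega
    exact_mod_cast this
  have hr1pos : 0 < Real.exp (-β) := Real.exp_pos _
  have hr1lt : Real.exp (-β) < 1 := by
    rw [← Real.exp_zero]
    exact Real.exp_lt_exp.mpr (by linarith)
  have hr2pos : 0 < Real.exp (-(α / (Real.exp 1 - 1))) := Real.exp_pos _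
  have hr2lt : Real.exp (-(α / (Real.exp 1 - 1))) < 1 := by
    have h0 : 0 < α / (Real.exp 1 - 1) := div_pos hα0 (by linarith)
    have := Real.exp_lt_exp.mpr (show -(α / (Real.exp 1 - 1)) < 0 by linarith)
    simpa using this
  -- pointwise bound on the first regime
  have hbound1 : ∀ m : ℕ, m ∈ Finset.Icc 2 n → ((m:ℝ) ≤ (n:ℝ) / Real.exp 1) →
      ((m:ℝ)/n) ^ (α * (m:ℝ)) ≤ (3:ℝ) ^ (-(2*α)) * Real.exp (-β) ^ (m - 2) := by
    intro m hm hmE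
    obtain ⟨hm2, hmn⟩ := Finset.mem_Icc.mp hm
    have hm2' : (2:ℝ) ≤ m := by exact_mod_cast hm2
    have hm0 : (0:ℝ) < m := by linarith
    have ht0 : (0:ℝ) < (m:ℝ)/n := div_pos hm0 hn0
    have h1 : (2:ℝ) ≤ (n:ℝ)/Real.exp 1 := le_trans hm2' hmE
    have h2 : 2 * Real.exp 1 ≤ (n:ℝ) := by
      rw [le_div_iff₀ hEpos] at h1; linarith
    have hn6 : (6:ℝ) ≤ n := by
      have h3 : (5:ℝ) < n := by nlinarith
      have h4 : 5 < n := by exact_mod_cast h3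
      have h5 : 6 ≤ n := h4
      exact_mod_cast h5
    have ha3 : (2:ℝ)/n ≤ 1/3 := by
      rw [div_le_div_iff₀ hn0 (by norm_num : (0:ℝ) < 3)]
      linarith
    have htE : (m:ℝ)/n ≤ 1 / Real.exp 1 := by
      rw [div_le_div_iff₀ hn0 hEpos]
      have := (le_div_iff₀ hEpos).mp hmE
      linarith
    have hat : (2:ℝ)/n ≤ (m:ℝ)/n := by gcongr
    have hphi_at := hphi ((2:ℝ)/n) ((m:ℝ)/n) (by positivity) ha3 hat htE
    have hkey1 : (m:ℝ) * Real.log ((m:ℝ)/n) ≤ -(2*Real.log 3) - c*((m:ℝ) - 2) := by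
      have h5 := mul_le_mul_of_nonneg_left hphi_at hn0.le
      have e1 : (n:ℝ) * ((m:ℝ)/n * Real.log ((m:ℝ)/n) + c*((m:ℝ)/n))
          = (m:ℝ) * Real.log ((m:ℝ)/n) + c*(m:ℝ) := by
        field_simp
      have e2 : (n:ℝ) * ((2:ℝ)/n * Real.log ((2:ℝ)/n) + c*((2:ℝ)/n))
          = 2 * Real.log ((2:ℝ)/n) + c*2 := by
        field_simp
      rw [e1, e2] at h5
      have h6 : Real.log ((2:ℝ)/n) ≤ -Real.log 3 := by
        rw [← hlog13]
        exact Real.log_le_log (by positivity) ha3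
      linarith
    -- now exponential form
    rw [Real.rpow_def_of_pos ht0, Real.rpow_def_of_pos (by norm_num : (0:ℝ) < 3),
        ← Real.exp_nat_mul, ← Real.exp_add]
    apply Real.exp_le_exp.mpr
    have hcast : ((m - 2 : ℕ) : ℝ) = (m:ℝ) - 2 := by
      push_cast [hm2]; ring
    rw [hcast, hβ']
    nlinarith [mul_le_mul_of_nonneg_left hkey1 hα0.le]
  -- pointwise bound on the second regime
  have hbound2 : ∀ m : ℕ, m ∈ Finset.Icc 2 n → ¬((m:ℝ) ≤ (n:ℝ) / Real.exp 1) →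
      ((m:ℝ)/n) ^ (α * (m:ℝ)) ≤ Real.exp (-(α / (Real.exp 1 - 1))) ^ (n - m) := by
    intro m hm hmE
    obtain ⟨hm2, hmn⟩ := Finset.mem_Icc.mp hm
    push_neg at hmE
    have hm2' : (2:ℝ) ≤ m := by exact_mod_cast hm2
    have hm0 : (0:ℝ) < m := by linarith
    have ht0 : (0:ℝ) < (m:ℝ)/n := div_pos hm0 hn0
    have hmn' : (m:ℝ) ≤ n := by exact_mod_cast hmn
    have hE1' : (0:ℝ) < Real.exp 1 - 1 := by linarith
    set c' : ℝ := -(1/(Real.exp 1 - 1)) with hc'def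
    have hc'_key : c' * (1 - 1 / Real.exp 1)
        = (1 / Real.exp 1) * Real.log (1 / Real.exp 1) - 1 * Real.log 1 := by
      rw [hlogE, Real.log_one, hc'def]
      field_simp
      ring
    have hpt : 1 / Real.exp 1 ≤ (m:ℝ)/n := by
      rw [div_le_div_iff₀ hEpos hn0]
      have := (div_le_iff₀ hEpos).mp hmE.le
      linarith
    have htq : (m:ℝ)/n ≤ 1 := (div_le_one hn0).mpr hmn'
    have hch := phi_chord' (by positivity : (0:ℝ) < 1 / Real.exp 1) hpt htq hc'_key
    have hkey2 : (m:ℝ) * Real.log ((m:ℝ)/n) ≤ -(((n:ℝ) - m)/(Real.exp 1 - 1)) := by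
      have h5 := mul_le_mul_of_nonneg_left hch hn0.le
      have e1 : (n:ℝ) * ((m:ℝ)/n * Real.log ((m:ℝ)/n) + c'*((m:ℝ)/n))
          = (m:ℝ) * Real.log ((m:ℝ)/n) + c'*(m:ℝ) := by
        field_simp
      rw [e1, hlogE] at h5
      have e2 : (n:ℝ) * (1 / Real.exp 1 * (-1) + c' * (1 / Real.exp 1)) - c' * m
          = -(((n:ℝ) - m)/(Real.exp 1 - 1)) := by
        rw [hc'def]
        field_simp
        ring
      linarith [e2 ▸ (by linarith [h5] : (m:ℝ) * Real.log ((m:ℝ)/n)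
        ≤ (n:ℝ) * (1 / Real.exp 1 * (-1) + c' * (1 / Real.exp 1)) - c' * m)]
    rw [Real.rpow_def_of_pos ht0, ← Real.exp_nat_mul]
    apply Real.exp_le_exp.mpr
    have hcast : ((n - m : ℕ) : ℝ) = (n:ℝ) - m := by
      push_cast [hmn]; ring
    rw [hcast]
    have := mul_le_mul_of_nonneg_left hkey2 hα0.le
    have heq : α * -(((n:ℝ) - m)/(Real.exp 1 - 1)) = ((n:ℝ) - m) * -(α / (Real.exp 1 - 1)) := by
      ring
    nlinarith [this]
  classical
  have hsplit := Finset.sum_filter_add_sum_filter_not (Finset.Icc 2 n)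
      (fun m => (m:ℝ) ≤ (n:ℝ) / Real.exp 1) (fun m => ((m:ℝ)/n) ^ (α * (m:ℝ)))
  have hA3 : (0:ℝ) ≤ (3:ℝ) ^ (-(2*α)) := Real.rpow_nonneg (by norm_num) _
  have hIco : Finset.Icc 2 n = Finset.Ico 2 (n+1) := by rw [Finset.Ico_add_one_right_eq_Icc]
  have hS1 : ∑ m ∈ (Finset.Icc 2 n).filter (fun m : ℕ => (m:ℝ) ≤ (n:ℝ) / Real.exp 1),
      ((m:ℝ)/n) ^ (α * (m:ℝ)) ≤ (3:ℝ) ^ (-(2*α)) / (1 - Real.exp (-β)) := by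
    have h1 : ∑ m ∈ (Finset.Icc 2 n).filter (fun m : ℕ => (m:ℝ) ≤ (n:ℝ) / Real.exp 1),
        ((m:ℝ)/n) ^ (α * (m:ℝ))
        ≤ ∑ m ∈ (Finset.Icc 2 n).filter (fun m : ℕ => (m:ℝ) ≤ (n:ℝ) / Real.exp 1),
          (3:ℝ) ^ (-(2*α)) * Real.exp (-β) ^ (m - 2) :=
      Finset.sum_le_sum (fun m hm =>
        hbound1 m (Finset.mem_filter.mp hm).1 (Finset.mem_filter.mp hm).2)
    have h2 : ∑ m ∈ (Finset.Icc 2 n).filter (fun m : ℕ => (m:ℝ) ≤ (n:ℝ) / Real.exp 1),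
        (3:ℝ) ^ (-(2*α)) * Real.exp (-β) ^ (m - 2)
        ≤ ∑ m ∈ Finset.Icc 2 n, (3:ℝ) ^ (-(2*α)) * Real.exp (-β) ^ (m - 2) :=
      Finset.sum_le_sum_of_subset_of_nonneg (Finset.filter_subset _ _)
        (fun i _ _ => by positivity)
    have h3 : ∑ m ∈ Finset.Icc 2 n, (3:ℝ) ^ (-(2*α)) * Real.exp (-β) ^ (m - 2)
        = (3:ℝ) ^ (-(2*α)) * ∑ i ∈ Finset.range (n-1), Real.exp (-β) ^ i := by
      rw [← Finset.mul_sum]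
      congr 1
      rw [hIco, Finset.sum_Ico_eq_sum_range, show n + 1 - 2 = n - 1 by omega]
      exact Finset.sum_congr rfl (fun i _ => by congr 1; omega)
    have h4 : ∑ i ∈ Finset.range (n-1), Real.exp (-β) ^ i ≤ 1/(1 - Real.exp (-β)) :=
      (geom_helper' hr1pos hr1lt _).le
    have h5 := mul_le_mul_of_nonneg_left h4 hA3
    rw [mul_one_div] at h5
    calc _ ≤ _ := h1
      _ ≤ _ := h2
      _ = _ := h3
      _ ≤ _ := h5
  have hS2 : ∑ m ∈ (Finset.Icc 2 n).filter (fun m : ℕ => ¬((m:ℝ) ≤ (n:ℝ) / Real.exp 1)),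
      ((m:ℝ)/n) ^ (α * (m:ℝ)) < 1 / (1 - Real.exp (-(α / (Real.exp 1 - 1)))) := by
    have h1 : ∑ m ∈ (Finset.Icc 2 n).filter (fun m : ℕ => ¬((m:ℝ) ≤ (n:ℝ) / Real.exp 1)),
        ((m:ℝ)/n) ^ (α * (m:ℝ))
        ≤ ∑ m ∈ (Finset.Icc 2 n).filter (fun m : ℕ => ¬((m:ℝ) ≤ (n:ℝ) / Real.exp 1)),
          Real.exp (-(α / (Real.exp 1 - 1))) ^ (n - m) :=
      Finset.sum_le_sum (fun m hm =>
        hbound2 m (Finset.mem_filter.mp hm).1 (Finset.mem_filter.mp hm).2)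
    have h2 : ∑ m ∈ (Finset.Icc 2 n).filter (fun m : ℕ => ¬((m:ℝ) ≤ (n:ℝ) / Real.exp 1)),
        Real.exp (-(α / (Real.exp 1 - 1))) ^ (n - m)
        ≤ ∑ m ∈ Finset.Icc 2 n, Real.exp (-(α / (Real.exp 1 - 1))) ^ (n - m) :=
      Finset.sum_le_sum_of_subset_of_nonneg (Finset.filter_subset _ _)
        (fun i _ _ => by positivity)
    have h3 : ∑ m ∈ Finset.Icc 2 n, Real.exp (-(α / (Real.exp 1 - 1))) ^ (n - m)
        = ∑ i ∈ Finset.range (n-1), Real.exp (-(α / (Real.exp 1 - 1))) ^ i := by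
      rw [hIco, Finset.sum_Ico_eq_sum_range, show n + 1 - 2 = n - 1 by omega]
      rw [← Finset.sum_range_reflect (fun i => Real.exp (-(α / (Real.exp 1 - 1))) ^ i) (n-1)]
      exact Finset.sum_congr rfl (fun i hi => by
        congr 1
        have := Finset.mem_range.mp hi
        omega)
    have h4 := geom_helper' hr2pos hr2lt (n-1)
    calc _ ≤ _ := h1
      _ ≤ _ := h2
      _ = _ := h3
      _ < _ := h4
  rw [hκ₁]
  linarith [hsplit, hS1, hS2]
end
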